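/- arXiv:1611.00333 — 3 statements merged into one kernel-verified Lean document; each statement's English description precedes it below -/
import Mathlib

section
/- Let L, C > 0, let T < π/(8√(LC)), and let ω : [0,T] → ℝ be differentiable with ω'(t) ≥ −ω(t)² − LC on [0,T]. If ω(s₀) > √(LC)·tan(3π/8) for some s₀ ∈ [0,T], then ω(t) ≥ √(LC) for all t ∈ [s₀, T]. -/
open Real Set

/-- If `T < π/(8√(LC))`, `ω' ≥ −ω² − LC` on `[0,T]`, and `ω(s₀) > √(LC)·tan(3π/8)`
for some `s₀ ∈ [0,T]`, then `ω(t) ≥ √(LC)` for all `t ∈ [s₀,T]`. -/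
theorem riccati_persistence
    (L C T : ℝ) (hL : 0 < L) (hC : 0 < C)
    (hT : T < π / (8 * Real.sqrt (L * C)))
    (ω ω' : ℝ → ℝ)
    (hderiv : ∀ t ∈ Icc (0:ℝ) T, HasDerivAt ω (ω' t) t)
    (hineq : ∀ t ∈ Icc (0:ℝ) T, ω' t ≥ -(ω t)^2 - L * C)
    (s₀ : ℝ) (hs₀ : s₀ ∈ Icc (0:ℝ) T)
    (hbig : ω s₀ > Real.sqrt (L * C) * Real.tan (3 * π / 8)) :
    ∀ t ∈ Icc s₀ T, ω t ≥ Real.sqrt (L * C) := by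
  set k := Real.sqrt (L * C) with hk
  have hk0 : 0 < k := Real.sqrt_pos.2 (mul_pos hL hC)
  have hk2 : k ^ 2 = L * C := Real.sq_sqrt (mul_pos hL hC).le
  set f : ℝ → ℝ := fun t => Real.arctan (ω t / k) + k * t with hf
  set f' : ℝ → ℝ := fun t => 1 / (1 + (ω t / k) ^ 2) * (ω' t / k) + k with hf'def
  have hdf : ∀ t ∈ Icc (0:ℝ) T, HasDerivAt f (f' t) t := by
    intro t ht
    have h2 : HasDerivAt (fun x => k * x) k t := by
      simpa using (hasDerivAt_id t).const_mul k
    exact (((hderiv t ht).div_const k).arctan).add h2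
  have hsub : Icc s₀ T ⊆ Icc (0:ℝ) T := Icc_subset_Icc hs₀.1 le_rfl
  have hf'nn : ∀ t ∈ Icc (0:ℝ) T, 0 ≤ f' t := by
    intro t ht
    have h1 : ω' t ≥ -(ω t)^2 - L * C := hineq t ht
    have hd : 0 < 1 + (ω t / k) ^ 2 := by positivity
    have e : f' t = (ω' t + k ^ 2 + (ω t) ^ 2) / (k * (1 + (ω t / k) ^ 2)) := by
      simp only [hf'def]
      field_simp
      ring
    rw [e]
    apply div_nonneg
    · nlinarith
    · positivity
  have hmono : MonotoneOn f (Icc s₀ T) := by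
    apply monotoneOn_of_hasDerivWithinAt_nonneg (convex_Icc _ _) (f' := f')
    · intro t ht
      exact (hdf t (hsub ht)).continuousAt.continuousWithinAt
    · intro t ht
      exact (hdf t (hsub (interior_subset ht))).hasDerivWithinAt
    · intro t ht
      exact hf'nn t (hsub (interior_subset ht))
  intro t ht
  have hle : f s₀ ≤ f t := hmono (left_mem_Icc.2 (ht.1.trans ht.2)) ht ht.1
  -- arctan (ω s₀ / k) > 3π/8
  have h38 : Real.arctan (ω s₀ / k) > 3 * π / 8 := by
    have : Real.tan (3 * π / 8) < ω s₀ / k := by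
      rw [lt_div_iff₀ hk0]
      linarith [hbig]
    calc 3 * π / 8 = Real.arctan (Real.tan (3 * π / 8)) := by
          rw [Real.arctan_tan] <;> nlinarith [Real.pi_pos]
    _ < Real.arctan (ω s₀ / k) := Real.arctan_strictMono this
  have hkt : k * (t - s₀) < π / 8 := by
    have h1 : t - s₀ ≤ T := by
      have := hs₀.1; linarith [ht.2]
    have h2 : k * T < π / 8 := by
      have := (lt_div_iff₀ (by positivity : (0:ℝ) < 8 * k)).1 hT
      nlinarith
    nlinarith
  have harct : Real.arctan (ω t / k) > π / 4 := by
    have : Real.arctan (ω s₀ / k) + k * s₀ ≤ Real.arctan (ω t / k) + k * t := hle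
    nlinarith [Real.pi_pos]
  have : (1:ℝ) < ω t / k := by
    by_contra h
    push_neg at h
    have h2 := Real.arctan_strictMono.monotone h
    rw [Real.arctan_one] at h2
    linarith
  calc k = k * 1 := by ring
  _ ≤ k * (ω t / k) := by nlinarith
  _ = ω t := by field_simp
end

section
/- Let ū ∈ H¹(ℝ) and define ȳ : ℝ → ℝ implicitly by ∫₀^{ȳ(ξ)} (1 + ū_x(x)²) dx = ξ. Then ȳ is well-defined (the map y ↦ ∫₀^y (1+ū_x²) is a strictly increasing bijection of ℝ), ȳ is Lipschitz with constant 1, strictly increasing, and differentiable almost everywhere with ȳ'(ξ) = 1/(1 + ū_x(ȳ(ξ))²) for a.e. ξ. -/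
/-! The integrand `g = 1 + ūx²` is locally integrable and `g ≥ 1`, so its primitive `F` is
continuous and expanding, `b - a ≤ F b - F a`: it is a strictly increasing bijection of `ℝ` whose
inverse `ȳ` is `1`-Lipschitz. By the Lebesgue differentiation theorem `F' = g` a.e. Since `ȳ`
pushes Lebesgue measure forward to `g dx`, which is absolutely continuous, the exceptional null
set pulls back to a null set, so `F'(ȳ ξ) = g(ȳ ξ) ≠ 0` for a.e. `ξ`, and the inverse function
rule gives `ȳ'(ξ) = 1 / g(ȳ ξ)`. -/

open Set Filter MeasureTheory intervalIntegral

theorem MeasureTheory.LocallyIntegrable.intervalIntegrable {E : Type*} [NormedAddCommGroup E]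
    {f : ℝ → E} (hf : LocallyIntegrable f) (a b : ℝ) : IntervalIntegrable f volume a b :=
  (hf.integrableOn_isCompact isCompact_uIcc).intervalIntegrable

section Expanding

variable {f : ℝ → ℝ}

theorem strictMono_of_sub_le_sub (hf : ∀ a b, a ≤ b → b - a ≤ f b - f a) : StrictMono f :=
  fun a b hab => by linarith [hf a b hab.le]

theorem antilipschitzWith_one_of_sub_le_sub (hf : ∀ a b, a ≤ b → b - a ≤ f b - f a) :
    AntilipschitzWith 1 f := by
  refine antilipschitzWith_iff_le_mul_dist.mpr fun a b => ?_
  wlog hab : a ≤ b generalizing a b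
  · rw [dist_comm, dist_comm (f a)]
    exact this b a (le_of_not_ge hab)
  have := hf a b hab
  rw [NNReal.coe_one, one_mul, Real.dist_eq, Real.dist_eq, abs_sub_comm,
    abs_of_nonneg (by linarith), abs_sub_comm, abs_of_nonneg (by linarith)]
  exact this

theorem surjective_of_sub_le_sub (hf : ∀ a b, a ≤ b → b - a ≤ f b - f a)
    (hc : Continuous f) : Function.Surjective f := by
  refine hc.surjective ?_ ?_
  · refine tendsto_atTop_mono' _ ?_
      (tendsto_atTop_add_const_right _ (f 0) tendsto_id)
    filter_upwards [eventually_ge_atTop 0] with y hy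
    show y + f 0 ≤ f y
    linarith [hf 0 y hy]
  · refine tendsto_atBot_mono' _ ?_
      (tendsto_atBot_add_const_right _ (f 0) tendsto_id)
    filter_upwards [eventually_le_atBot 0] with y hy
    show f y ≤ y + f 0
    linarith [hf y 0 hy]

end Expanding

section Primitive

variable {g : ℝ → ℝ} (c : ℝ)

theorem sub_le_primitive_sub (hg : LocallyIntegrable g) (hg1 : ∀ x, 1 ≤ g x) (a b : ℝ)
    (hab : a ≤ b) : b - a ≤ (∫ x in c..b, g x) - ∫ x in c..a, g x := by
  rw [integral_interval_sub_left (hg.intervalIntegrable c b) (hg.intervalIntegrable c a)]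
  calc b - a = ∫ _ in a..b, (1 : ℝ) := by simp
    _ ≤ ∫ x in a..b, g x :=
      integral_mono_on hab intervalIntegrable_const (hg.intervalIntegrable a b) fun x _ => hg1 x

theorem map_symm_volume_eq_withDensity (e : ℝ ≃o ℝ) (hg : LocallyIntegrable g)
    (hg0 : ∀ x, 0 ≤ g x) (he : ∀ y, e y = ∫ x in c..y, g x) :
    volume.map e.symm = volume.withDensity fun x => ENNReal.ofReal (g x) := by
  refine Measure.ext_of_Ioc' _ _ (fun a b _ => ?_) fun a b hab => ?_
  · rw [Measure.map_apply e.symm.continuous.measurable measurableSet_Ioc]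
    simp
  · rw [Measure.map_apply e.symm.continuous.measurable measurableSet_Ioc, OrderIso.preimage_Ioc,
      e.symm_symm, Real.volume_Ioc, he, he, withDensity_apply _ measurableSet_Ioc,
      integral_interval_sub_left (hg.intervalIntegrable c b) (hg.intervalIntegrable c a),
      integral_of_le hab.le,
      ofReal_integral_eq_lintegral_ofReal (hg.intervalIntegrable a b).1 (ae_of_all _ hg0)]

theorem ae_hasDerivAt_symm_of_primitive (e : ℝ ≃o ℝ) (hg : LocallyIntegrable g)
    (hg_pos : ∀ x, 0 < g x) (he : ∀ y, e y = ∫ x in c..y, g x) :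
    ∀ᵐ ξ, HasDerivAt e.symm (g (e.symm ξ))⁻¹ ξ := by
  have hderiv : ∀ᵐ y, HasDerivAt e (g y) y := by
    filter_upwards [LocallyIntegrable.ae_hasDerivAt_integral hg] with y hy
    simpa only [← he] using hy c
  have hmap := map_symm_volume_eq_withDensity c e hg (fun x => (hg_pos x).le) he
  have : ∀ᵐ ξ, HasDerivAt e (g (e.symm ξ)) (e.symm ξ) := by
    refine ae_of_ae_map (p := fun y => HasDerivAt e (g y) y)
      e.symm.continuous.measurable.aemeasurable ?_
    rw [hmap]
    exact (withDensity_absolutelyContinuous _ _).ae_le hderiv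
  filter_upwards [this] with ξ hξ
  exact hξ.of_local_left_inverse e.symm.continuous.continuousAt (hg_pos _).ne'
    (Eventually.of_forall e.apply_symm_apply)

end Primitive

theorem change_of_variables_ybar_general
    (ubarx : ℝ → ℝ)
    (hL2 : MeasureTheory.MemLp ubarx 2 (volume : Measure ℝ)) :
    (StrictMono fun y : ℝ => ∫ x in (0:ℝ)..y, (1 + (ubarx x)^2)) ∧
    (Function.Bijective fun y : ℝ => ∫ x in (0:ℝ)..y, (1 + (ubarx x)^2)) ∧
    ∃ ybar : ℝ → ℝ,
      (∀ ξ : ℝ, (∫ x in (0:ℝ)..(ybar ξ), (1 + (ubarx x)^2)) = ξ) ∧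
      LipschitzWith 1 ybar ∧ StrictMono ybar ∧
      (∀ᵐ ξ : ℝ, HasDerivAt ybar (1 / (1 + (ubarx (ybar ξ))^2)) ξ) := by
  have hg : LocallyIntegrable fun x => 1 + ubarx x ^ 2 :=
    (locallyIntegrable_const 1).add hL2.integrable_sq.locallyIntegrable
  have hg1 (x : ℝ) : 1 ≤ 1 + ubarx x ^ 2 := le_add_of_nonneg_right (sq_nonneg _)
  have hexp := sub_le_primitive_sub 0 hg hg1
  have hmono := strictMono_of_sub_le_sub hexp
  have hsurj := surjective_of_sub_le_sub hexp (continuous_primitive hg.intervalIntegrable 0)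
  let e := hmono.orderIsoOfSurjective _ hsurj
  refine ⟨hmono, ⟨hmono.injective, hsurj⟩, e.symm, e.apply_symm_apply, ?_, e.symm.strictMono,
    ?_⟩
  · simpa only [inv_one] using
      (antilipschitzWith_one_of_sub_le_sub hexp).to_rightInverse e.apply_symm_apply
  · simpa only [one_div] using ae_hasDerivAt_symm_of_primitive 0 e hg
      (fun x => one_pos.trans_le (hg1 x)) fun _ => rfl

/-- The Bressan–Constantin change of variables: for `ū ∈ H¹(ℝ)` with weak derivative
`ūx ∈ L²(ℝ)`, the map `y ↦ ∫₀^y (1 + ūx²)` is a strictly increasing bijection of `ℝ`,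
and its inverse `ȳ` (defined by `∫₀^{ȳ(ξ)}(1 + ūx²) = ξ`) is `1`-Lipschitz, strictly
increasing, and a.e. differentiable with `ȳ'(ξ) = 1/(1 + ūx(ȳ(ξ))²)`. -/
theorem change_of_variables_ybar
    (ubarx : ℝ → ℝ)
    (hmeas : Measurable ubarx)
    (hL2 : MeasureTheory.MemLp ubarx 2 (volume : Measure ℝ)) :
    (StrictMono fun y : ℝ => ∫ x in (0:ℝ)..y, (1 + (ubarx x)^2)) ∧
    (Function.Bijective fun y : ℝ => ∫ x in (0:ℝ)..y, (1 + (ubarx x)^2)) ∧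
    ∃ ybar : ℝ → ℝ,
      (∀ ξ : ℝ, (∫ x in (0:ℝ)..(ybar ξ), (1 + (ubarx x)^2)) = ξ) ∧
      LipschitzWith 1 ybar ∧ StrictMono ybar ∧
      (∀ᵐ ξ : ℝ, HasDerivAt ybar (1 / (1 + (ubarx (ybar ξ))^2)) ξ) :=
  change_of_variables_ybar_general ubarx hL2
end

section
/- Let v : [0,T] → ℝ be differentiable with v' = u² − (1/2)v² − P, where u, P are continuous and bounded on [0,T]. Then v is either bounded on [0,T] or lim_{t↑T₀} v(t) = −∞ for some T₀ ≤ T; in particular, v cannot blow up to +∞ and the limit lim_{t↑T₀} v(t) ∈ [−∞, +∞) exists at any maximal existence time T₀. -/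
open Real Set Filter

/-- Along a characteristic, `v` solves a Riccati equation with bounded forcing:
`v' = u² − v²/2 − P` with `u, P` bounded. Then on a maximal interval `[0,T₀)` either
`v` is bounded or `v(t) → −∞` as `t ↑ T₀`; in particular `v` cannot blow up to `+∞`. -/
theorem riccati_no_plus_blowup
    (T T₀ B : ℝ) (hT₀ : 0 < T₀) (hT₀T : T₀ ≤ T)
    (v u P : ℝ → ℝ)
    (hu : Continuous u) (hP : Continuous P)
    (huB : ∀ t ∈ Icc (0:ℝ) T, |u t| ≤ B)
    (hPB : ∀ t ∈ Icc (0:ℝ) T, |P t| ≤ B)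
    (hderiv : ∀ t ∈ Ico (0:ℝ) T₀,
      HasDerivAt v ((u t)^2 - (1/2) * (v t)^2 - P t) t) :
    (∃ C : ℝ, ∀ t ∈ Ico (0:ℝ) T₀, |v t| ≤ C) ∨
      Tendsto v (nhdsWithin T₀ (Iio T₀)) atBot := by
  have hTpos : (0:ℝ) < T := lt_of_lt_of_le hT₀ hT₀T
  have hB : 0 ≤ B := le_trans (abs_nonneg _) (huB 0 ⟨le_refl 0, hTpos.le⟩)
  set C : ℝ := B ^ 2 + B + 1 with hCdef
  have hCpos : 0 < C := by positivity
  have hsub : Ico (0:ℝ) T₀ ⊆ Icc 0 T := fun t ht => ⟨ht.1, le_trans ht.2.le hT₀T⟩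
  -- pointwise bound on the forcing
  have hforce : ∀ t ∈ Ico (0:ℝ) T₀,
      (u t) ^ 2 - (1/2) * (v t) ^ 2 - P t ≤ B ^ 2 + B - (1/2) * (v t) ^ 2 := by
    intro t ht
    have h1 : (u t) ^ 2 ≤ B ^ 2 := by
      have := huB t (hsub ht)
      nlinarith [abs_nonneg (u t), sq_abs (u t), neg_abs_le (u t), le_abs_self (u t)]
    have h2 : -P t ≤ B := by
      have := (abs_le.mp (hPB t (hsub ht))).1; linarith
    linarith
  have hvcont : ∀ t ∈ Ico (0:ℝ) T₀, ContinuousAt v t :=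
    fun t ht => (hderiv t ht).continuousAt
  -- invariance: once v drops below -K (with K² ≥ 2C), it stays below
  have key : ∀ K : ℝ, 0 ≤ K → 2 * C ≤ K ^ 2 → ∀ s ∈ Ico (0:ℝ) T₀, v s ≤ -K →
      ∀ t ∈ Ico (0:ℝ) T₀, s ≤ t → v t ≤ -K := by
    intro K hK hK2 s hs hvs t ht hst
    by_contra hvt
    push_neg at hvt
    have hIcc : Icc s t ⊆ Ico (0:ℝ) T₀ := fun r hr => ⟨le_trans hs.1 hr.1, lt_of_le_of_lt hr.2 ht.2⟩
    have hcontOn : ContinuousOn v (Icc s t) :=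
      fun r hr => (hvcont r (hIcc hr)).continuousWithinAt
    set S : Set ℝ := Icc s t ∩ v ⁻¹' Iic (-K) with hSdef
    have hSclosed : IsClosed S :=
      hcontOn.preimage_isClosed_of_isClosed isClosed_Icc isClosed_Iic
    have hSne : S.Nonempty := ⟨s, ⟨le_refl s, hst⟩, hvs⟩
    have hSbdd : BddAbove S := ⟨t, fun r hr => hr.1.2⟩
    have ht₁mem : sSup S ∈ S := hSclosed.csSup_mem hSne hSbdd
    set t₁ : ℝ := sSup S with ht₁def
    have ht₁t : t₁ ≤ t := ht₁mem.1.2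
    have hst₁ : s ≤ t₁ := ht₁mem.1.1
    have hvt₁ : v t₁ ≤ -K := ht₁mem.2
    have ht₁lt : t₁ < t := lt_of_le_of_ne ht₁t (by
      intro h; rw [h] at hvt₁; linarith)
    have ht₁Ico : t₁ ∈ Ico (0:ℝ) T₀ := hIcc ⟨hst₁, ht₁t⟩
    -- any r ∈ (t₁, t] has v r > -K
    have hafter : ∀ r ∈ Ioc t₁ t, -K < v r := by
      intro r hr
      by_contra h
      push_neg at h
      have : r ∈ S := ⟨⟨le_trans hst₁ hr.1.le, hr.2⟩, h⟩
      exact absurd (le_csSup hSbdd this) (not_le.mpr hr.1)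
    -- derivative at t₁ is strictly negative
    set d : ℝ := (u t₁) ^ 2 - (1/2) * (v t₁) ^ 2 - P t₁ with hddef
    have hvsq : K ^ 2 ≤ (v t₁) ^ 2 := by nlinarith
    have hdneg : d < 0 := by
      have h1 := hforce t₁ ht₁Ico
      show d < 0
      rw [hddef]
      linarith [hK2, hCdef, hvsq]
    have hder : HasDerivWithinAt v d (Ioi t₁) t₁ := (hderiv t₁ ht₁Ico).hasDerivWithinAt
    have hslope : Tendsto (slope v t₁) (nhdsWithin t₁ (Ioi t₁ \ {t₁})) (nhds d) :=
      hasDerivWithinAt_iff_tendsto_slope.mp hder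
    rw [Set.diff_singleton_eq_self (by simp)] at hslope
    have hev1 : ∀ᶠ r in nhdsWithin t₁ (Ioi t₁), slope v t₁ r < 0 :=
      hslope.eventually (gt_mem_nhds hdneg)
    have hev2 : Ioc t₁ t ∈ nhdsWithin t₁ (Ioi t₁) := Ioc_mem_nhdsGT ht₁lt
    rcases (hev1.and hev2).exists with ⟨r, hr1, hr2⟩
    have hrpos : 0 < r - t₁ := by simp only [sub_pos]; exact hr2.1
    have hmul : slope v t₁ r * (r - t₁) < 0 := mul_neg_of_neg_of_pos hr1 hrpos
    rw [slope_def_field] at hmul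
    rw [div_mul_cancel₀ _ (ne_of_gt hrpos)] at hmul
    have : v r < v t₁ := by linarith
    exact absurd (hafter r hr2) (not_lt.mpr (le_trans this.le hvt₁))
  -- upper bound: v t ≤ v 0 + C * t on [0, T₀)
  have hub : ∀ t ∈ Ico (0:ℝ) T₀, v t ≤ v 0 + C * T₀ := by
    intro t ht
    rcases eq_or_lt_of_le ht.1 with h0 | h0
    · have : v t = v 0 := by rw [← h0]
      rw [this]; nlinarith
    have hIcc : Icc (0:ℝ) t ⊆ Ico (0:ℝ) T₀ := fun r hr => ⟨hr.1, lt_of_le_of_lt hr.2 ht.2⟩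
    set g : ℝ → ℝ := fun r => v r - C * r with hgdef
    have hgderiv : ∀ r ∈ Ico (0:ℝ) T₀, HasDerivAt g
        ((u r) ^ 2 - (1/2) * (v r) ^ 2 - P r - C) r := by
      intro r hr
      exact (hderiv r hr).sub (by simpa using (hasDerivAt_id r).const_mul C)
    have hanti : AntitoneOn g (Icc 0 t) := by
      apply antitoneOn_of_deriv_nonpos (convex_Icc 0 t)
      · exact fun r hr => (hgderiv r (hIcc hr)).continuousAt.continuousWithinAt
      · intro r hr
        rw [interior_Icc] at hr
        exact ((hgderiv r (hIcc ⟨hr.1.le, hr.2.le⟩)).differentiableAt).differentiableWithinAt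
      · intro r hr
        rw [interior_Icc] at hr
        have hrm : r ∈ Ico (0:ℝ) T₀ := hIcc ⟨hr.1.le, hr.2.le⟩
        rw [(hgderiv r hrm).deriv]
        have := hforce r hrm
        nlinarith [sq_nonneg (v r)]
    have := hanti (left_mem_Icc.mpr ht.1) ⟨ht.1, le_refl t⟩ ht.1
    simp only [hgdef] at this
    have h1 : v t ≤ v 0 + C * t := by nlinarith
    have h2 : C * t ≤ C * T₀ := by nlinarith [ht.2.le]
    linarith
  by_cases hbdd : ∃ m : ℝ, ∀ t ∈ Ico (0:ℝ) T₀, -m ≤ v t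
  · left
    obtain ⟨m, hm⟩ := hbdd
    refine ⟨max (v 0 + C * T₀) m, fun t ht => abs_le.mpr ⟨?_, ?_⟩⟩
    · have := hm t ht
      have : -max (v 0 + C * T₀) m ≤ -m := neg_le_neg (le_max_right _ _)
      linarith [hm t ht]
    · exact le_trans (hub t ht) (le_max_left _ _)
  · right
    push_neg at hbdd
    rw [tendsto_atBot]
    intro b
    set K : ℝ := max (Real.sqrt (2 * C)) (-b) with hKdef
    have hK0 : 0 ≤ K := le_trans (Real.sqrt_nonneg _) (le_max_left _ _)
    have hK2 : 2 * C ≤ K ^ 2 := by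
      have h1 : Real.sqrt (2 * C) ≤ K := le_max_left _ _
      have h2 : Real.sqrt (2 * C) ^ 2 = 2 * C := Real.sq_sqrt (by positivity)
      nlinarith [Real.sqrt_nonneg (2 * C)]
    obtain ⟨s, hs, hvs⟩ := hbdd K
    have hvs' : v s ≤ -K := hvs.le
    have hperm : ∀ t ∈ Ico (0:ℝ) T₀, s ≤ t → v t ≤ -K := key K hK0 hK2 s hs hvs'
    have hmem : Ioo s T₀ ∈ nhdsWithin T₀ (Iio T₀) :=
      Ioo_mem_nhdsLT_of_mem ⟨hs.2, le_refl T₀⟩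
    filter_upwards [hmem] with t ht
    have : v t ≤ -K := hperm t ⟨le_trans hs.1 ht.1.le, ht.2⟩ ht.1.le
    have : -K ≤ b := by
      have := le_max_right (Real.sqrt (2 * C)) (-b)
      linarith
    linarith [hperm t ⟨le_trans hs.1 ht.1.le, ht.2⟩ ht.1.le]
end
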